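/- arXiv:2302.00776 — 2 statements merged into one kernel-verified Lean document; each statement's English description precedes it below -/
import Mathlib

section
/- Optimality of best-first extraction over interval nodes: consider a best-first search over nodes n = (v, [t_l(n), t_u(n)]) ordered by f(n) = t_l(n) + h(v) with h : V → ℕ admissible and consistent (h(goal) = 0 and h(v) ≤ w(v,v') + h(v') for every edge), where expanding a node generates successors whose t_l is the earliest valid arrival time, always satisfying t_l(n') ≥ t_l(n) + w(e) for the connecting edge e. If every reachable timed state (v,t) is contained in some generated node, then the first extracted node n* with n*.v = goal satisfies: t_l(n*) equals the minimum over all reachable timed states (goal, t) of t. -/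
/-- Optimality of best-first extraction over interval nodes. Nodes are
triples (v, t_l, t_u) containing the timed states {(v,t) : t_l ≤ t ≤ t_u},
ordered by f(n) = t_l(n) + h(v). Assume h is admissible and consistent
(h goal = 0 and h v ≤ w v v' + h v'), that the lower endpoint of every OPEN
node is a reachable timed state, and the A*-frontier invariant: every
reachable timed state is contained in some OPEN node. Then the first
extracted node n* with n*.v = goal (i.e. an OPEN node with goal vertex of
minimal f-value) has t_l(n*) equal to the minimal reachable arrival time at
the goal. -/
theorem best_first_extraction_optimal {V : Type} (goal : V) (h : V → ℕ)
    (w : V → V → ℕ) (Reach : V → ℕ → Prop) (OPEN : Set (V × ℕ × ℕ))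
    (hgoal : h goal = 0)
    (hcons : ∀ v v', h v ≤ w v v' + h v')
    (hsound : ∀ n ∈ OPEN, Reach n.1 n.2.1)
    (hinv : ∀ v t, Reach v t → ∃ n ∈ OPEN, n.1 = v ∧ n.2.1 ≤ t ∧ t ≤ n.2.2)
    (nstar : V × ℕ × ℕ) (hmem : nstar ∈ OPEN) (hv : nstar.1 = goal)
    (hmin : ∀ n ∈ OPEN, nstar.2.1 + h nstar.1 ≤ n.2.1 + h n.1) :
    IsLeast {t : ℕ | Reach goal t} nstar.2.1 := by
  constructor
  · have := hsound nstar hmem; rwa [hv] at this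
  · intro t ht
    obtain ⟨n, hn, hng, hl, _⟩ := hinv goal t ht
    have := hmin n hn
    rw [hv, hng, hgoal] at this
    omega
end

section
/- Completeness via state-set correspondence: let R ⊆ V × ℕ be the set of timed states reachable in the A*-with-time-steps transition system (closed under applying valid move and wait actions from reachable states, containing the start state). If an algorithm maintains a collection N of interval nodes such that (i) the start node's interval contains the start time, (ii) whenever a node n ∈ N is expanded, for every valid transition from every timed state contained in n, the resulting timed state is contained in some generated successor node, and (iii) every node in N is eventually expanded if the search does not terminate with success, then every state in R is contained in some node of N; consequently, if a goal timed state is reachable, the algorithm finds a node containing a goal timed state. -/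
/-- An interval node (v, t_l, t_u) contains the timed state (u, t) iff v = u
and t_l ≤ t ≤ t_u. -/
def nodeContains {V : Type} (n : V × ℕ × ℕ) (s : V × ℕ) : Prop :=
  n.1 = s.1 ∧ n.2.1 ≤ s.2 ∧ s.2 ≤ n.2.2

/-- Completeness via state-set correspondence: let `Step` be the valid
transition relation of the A*-with-time-steps system and let the reachable
set R be the states reachable from the start timed state. If (i) some node
of the maintained collection N contains the start state, and (ii) whenever a
node of N contains a timed state s, every valid transition from s leads to a
timed state contained in some node of N (every node of N being eventually
expanded), then every reachable timed state is contained in some node of N;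
consequently, if a goal timed state is reachable, some node of N contains a
goal timed state. -/
theorem completeness_state_set_correspondence {V : Type}
    (Step : V × ℕ → V × ℕ → Prop) (start : V × ℕ)
    (N : Set (V × ℕ × ℕ))
    (hstart : ∃ n ∈ N, nodeContains n start)
    (hexp : ∀ n ∈ N, ∀ s, nodeContains n s → ∀ s', Step s s' →
      ∃ n' ∈ N, nodeContains n' s')
    (Goal : V × ℕ → Prop) :
    (∀ s, Relation.ReflTransGen Step start s → ∃ n ∈ N, nodeContains n s) ∧
    ((∃ s, Relation.ReflTransGen Step start s ∧ Goal s) →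
      ∃ n ∈ N, ∃ s, nodeContains n s ∧ Goal s) := by
  have main : ∀ s, Relation.ReflTransGen Step start s → ∃ n ∈ N, nodeContains n s := by
    intro s h
    induction h with
    | refl => exact hstart
    | tail _ hstep ih =>
      obtain ⟨n, hn, hc⟩ := ih
      exact hexp n hn _ hc _ hstep
  refine ⟨main, ?_⟩
  rintro ⟨s, hr, hg⟩
  obtain ⟨n, hn, hc⟩ := main s hr
  exact ⟨n, hn, s, hc, hg⟩
end
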